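/- Let H be a graph and T a tree on t vertices, and suppose U ⊆ V(H) is such that H \ U has r connected components and the (U, t)-blow-up of H is T-free. Then for every n divisible by |H|, there exists a T-free graph G on n vertices containing at least (n/|H|)^r copies of H. Consequently ex(n, H, T) = Ω(n^r). -/

import Mathlib

def IsCopy {α β : Type*} (H : SimpleGraph α) (G : SimpleGraph β) (f : α ↪ β) : Prop :=
  ∀ a b, H.Adj a b → G.Adj (f a) (f b)

def HasCopy {α β : Type*} (H : SimpleGraph α) (G : SimpleGraph β) : Prop :=
  ∃ f : α ↪ β, IsCopy H G f

def TFree {α β : Type*} (G : SimpleGraph β) (T : SimpleGraph α) : Prop := ¬ HasCopy T G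

noncomputable def copyCount {α β : Type*} (H : SimpleGraph α) (G : SimpleGraph β) : ℕ :=
  Nat.card {f : α ↪ β // IsCopy H G f}

noncomputable def exNum {α γ : Type*} (n : ℕ) (H : SimpleGraph α) (T : SimpleGraph γ) : ℕ :=
  sSup {m | ∃ G : SimpleGraph (Fin n), TFree G T ∧ copyCount H G = m}

def bproj {α : Type*} (U : Set α) (t : ℕ) : (↥U ⊕ ↥(Uᶜ) × Fin t) → α
  | Sum.inl u => u.1
  | Sum.inr p => p.1.1

def sameCopy {α : Type*} (U : Set α) (t : ℕ) :
    (↥U ⊕ ↥(Uᶜ) × Fin t) → (↥U ⊕ ↥(Uᶜ) × Fin t) → Prop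
  | Sum.inr p, Sum.inr q => p.2 = q.2
  | _, _ => True

/-- The `(U, t)`-blow-up of `H`: `t` copies of `H` with the vertices of `U` identified. -/
def blowup {α : Type*} (H : SimpleGraph α) (U : Set α) (t : ℕ) :
    SimpleGraph (↥U ⊕ ↥(Uᶜ) × Fin t) where
  Adj x y := H.Adj (bproj U t x) (bproj U t y) ∧ sameCopy U t x y
  symm := by
    constructor
    rintro x y ⟨h1, h2⟩
    refine ⟨h1.symm, ?_⟩
    cases x <;> cases y <;> simp_all [sameCopy, eq_comm]
  loopless := by
    constructor
    rintro x ⟨h1, _⟩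
    exact H.irrefl h1

/-!
Take `G` to be the `(U, k)`-blow-up of `H` for `k = n / |H|`, padded with isolated vertices; it has
at most `n` vertices. Sending the components of `H \ U` independently to any of the `k` copies gives
`k ^ r` distinct copies of `H` in `G`. A copy of the tree `T` in `G` avoids the isolated vertices
(a tree on at least two vertices has none), and meets at most `|T|` of the `k` copies of `H \ U`;
reindexing these injectively into `|T|` copies moves it into the `(U, |T|)`-blow-up, which is
`T`-free.
-/
section Copies

variable {α β β' γ : Type*} {H : SimpleGraph α} {T : SimpleGraph γ}

theorem copyCount_le_of_embedding {G : SimpleGraph β} {G' : SimpleGraph β'} [Finite β']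
    (φ : G ↪g G') : copyCount H G ≤ copyCount H G' :=
  Nat.card_le_card_of_injective
    (fun f => ⟨f.1.trans φ.toEmbedding, fun a b hab => φ.map_rel_iff.2 (f.2 a b hab)⟩)
    fun _ _ hfg => Subtype.ext <| Function.Embedding.ext fun a =>
      φ.injective (DFunLike.congr_fun (congrArg Subtype.val hfg) a)

theorem HasCopy.of_map {G : SimpleGraph β} (hT : ∀ v, ∃ w, T.Adj v w) (f : β ↪ β')
    (h : HasCopy T (G.map f)) : HasCopy T G := by
  obtain ⟨g, hg⟩ := h
  have hrange : ∀ v, ∃ x, f x = g v := fun v => by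
    obtain ⟨w, hw⟩ := hT v
    obtain ⟨x, -, -, hx, -⟩ := (SimpleGraph.map_adj f G _ _).1 (hg v w hw)
    exact ⟨x, hx⟩
  choose g' hg' using hrange
  refine ⟨⟨g', fun a b hab => g.injective (by rw [← hg' a, ← hg' b, hab])⟩,
    fun a b hab => ?_⟩
  obtain ⟨x, y, hxy, hx, hy⟩ := (SimpleGraph.map_adj f G _ _).1 (hg a b hab)
  show G.Adj (g' a) (g' b)
  rwa [f.injective ((hg' a).trans hx.symm), f.injective ((hg' b).trans hy.symm)]

theorem TFree.map {G : SimpleGraph β} (hG : TFree G T) (hT : ∀ v, ∃ w, T.Adj v w)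
    (f : β ↪ β') : TFree (G.map f) T :=
  fun h => hG (h.of_map hT f)

theorem hasCopy_of_subsingleton [Subsingleton γ] [Nonempty β] (T : SimpleGraph γ)
    (G : SimpleGraph β) : HasCopy T G :=
  ⟨⟨fun _ => Classical.arbitrary β, fun a b _ => Subsingleton.elim a b⟩,
    fun a b hab => absurd (Subsingleton.elim a b) hab.ne⟩

theorem copyCount_le_exNum {n : ℕ} {G : SimpleGraph (Fin n)} (hG : TFree G T) :
    copyCount H G ≤ exNum n H T := by
  refine le_csSup ⟨Nat.card (α ↪ Fin n), ?_⟩ ⟨G, hG, rfl⟩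
  rintro m ⟨G', -, rfl⟩
  exact Nat.card_le_card_of_injective Subtype.val Subtype.val_injective

end Copies

section Blowup

variable {α γ : Type*} {H : SimpleGraph α} {U : Set α} {k l : ℕ}

variable (H U) in
def blowupMap (j : Fin k → Fin l) : blowup H U k →g blowup H U l where
  toFun := Sum.map id (Prod.map id j)
  map_rel' := by
    rintro (u | ⟨x, i⟩) (u' | ⟨x', i'⟩) ⟨hadj, hsame⟩
    exacts [⟨hadj, trivial⟩, ⟨hadj, trivial⟩, ⟨hadj, trivial⟩,
      ⟨hadj, congrArg j hsame⟩]

theorem encard_copies_met_le [Finite γ] (f : γ ↪ (↥U ⊕ ↥Uᶜ × Fin k)) :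
    (Prod.snd '' (Sum.inr ⁻¹' Set.range f)).encard ≤ Nat.card γ :=
  calc (Prod.snd '' (Sum.inr ⁻¹' Set.range f)).encard
      ≤ (Sum.inr ⁻¹' Set.range f).encard := Set.encard_image_le _ _
    _ ≤ (Set.range f).encard :=
        Set.encard_le_encard_of_injOn (fun _ h => h) Sum.inr_injective.injOn
    _ = Nat.card γ := by
        rw [← Set.image_univ, f.injective.encard_image, Set.encard_univ,
          ENat.card_eq_coe_natCard]

theorem HasCopy.blowup_of_card_le {T : SimpleGraph γ} [Finite γ] (hl : Nat.card γ ≤ l)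
    [NeZero l] (h : HasCopy T (blowup H U k)) : HasCopy T (blowup H U l) := by
  obtain ⟨f, hf⟩ := h
  obtain ⟨j, -, hj⟩ := Set.Finite.exists_injOn_of_encard_le (Set.toFinite _)
    (t := (Set.univ : Set (Fin l))) <| by
      simpa using (encard_copies_met_le f).trans (by exact_mod_cast hl)
  refine ⟨⟨blowupMap H U j ∘ f, fun v w hvw => f.injective ?_⟩,
    fun a b hab => (blowupMap H U j).map_rel (hf a b hab)⟩
  rcases hv : f v with u | ⟨x, i⟩ <;> rcases hw : f w with u' | ⟨x', i'⟩ <;>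
    simp only [Function.comp, hv, hw, blowupMap, RelHom.coeFn_mk, Sum.map_inl, Sum.map_inr,
      reduceCtorEq, Sum.inl.injEq, Sum.inr.injEq, Prod.map, id, Prod.mk.injEq] at hvw ⊢
  · exact hvw
  · exact ⟨hvw.1, hj ⟨(x, i), ⟨v, hv⟩, rfl⟩ ⟨(x', i'), ⟨w, hw⟩, rfl⟩ hvw.2⟩

variable (H U k)

open Classical in
noncomputable def blowupCopy (c : (H.induce Uᶜ).ConnectedComponent → Fin k) :
    α ↪ (↥U ⊕ ↥Uᶜ × Fin k) where
  toFun x := if hx : x ∈ U then .inl ⟨x, hx⟩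
    else .inr (⟨x, hx⟩, c ((H.induce Uᶜ).connectedComponentMk ⟨x, hx⟩))
  inj' x y hxy := by
    by_cases hx : x ∈ U <;> by_cases hy : y ∈ U <;> simp_all

variable {H U k} {c : (H.induce Uᶜ).ConnectedComponent → Fin k} {x : α}

theorem blowupCopy_of_mem (hx : x ∈ U) : blowupCopy H U k c x = .inl ⟨x, hx⟩ :=
  dif_pos hx

theorem blowupCopy_of_notMem (hx : x ∉ U) :
    blowupCopy H U k c x =
      .inr (⟨x, hx⟩, c ((H.induce Uᶜ).connectedComponentMk ⟨x, hx⟩)) :=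
  dif_neg hx

theorem bproj_blowupCopy : bproj U k (blowupCopy H U k c x) = x := by
  by_cases hx : x ∈ U
  · rw [blowupCopy_of_mem hx]; rfl
  · rw [blowupCopy_of_notMem hx]; rfl

theorem isCopy_blowupCopy (c : (H.induce Uᶜ).ConnectedComponent → Fin k) :
    IsCopy H (blowup H U k) (blowupCopy H U k c) := by
  intro a b hab
  refine ⟨by rwa [bproj_blowupCopy, bproj_blowupCopy], ?_⟩
  by_cases ha : a ∈ U
  · rw [blowupCopy_of_mem ha]; trivial
  by_cases hb : b ∈ U
  · rw [blowupCopy_of_mem hb]; cases blowupCopy H U k c a <;> trivial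
  rw [blowupCopy_of_notMem ha, blowupCopy_of_notMem hb]
  exact congrArg c
    (SimpleGraph.ConnectedComponent.connectedComponentMk_eq_of_adj (by simpa using hab))

theorem blowupCopy_injective : Function.Injective (blowupCopy H U k) := by
  intro c c' hcc
  funext C
  obtain ⟨x, rfl⟩ := C.exists_rep
  have hx := congrArg (fun e => e x.1) hcc
  simp only [blowupCopy_of_notMem x.2, Sum.inr.injEq, Prod.mk.injEq] at hx
  exact hx.2

theorem pow_card_connectedComponent_le_copyCount [Finite α] :
    k ^ Nat.card (H.induce Uᶜ).ConnectedComponent ≤ copyCount H (blowup H U k) :=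
  calc k ^ Nat.card (H.induce Uᶜ).ConnectedComponent
      = Nat.card ((H.induce Uᶜ).ConnectedComponent → Fin k) := by simp [Nat.card_fun]
    _ ≤ copyCount H (blowup H U k) :=
        Nat.card_le_card_of_injective (fun c => ⟨_, isCopy_blowupCopy c⟩)
          fun _ _ h => blowupCopy_injective (congrArg Subtype.val h)

theorem nonempty_embedding_fin_mul [Finite α] (U : Set α) (hk : 0 < k) :
    Nonempty ((↥U ⊕ ↥Uᶜ × Fin k) ↪ Fin (Nat.card α * k)) := by
  classical
  have hcard : Nat.card (↥U ⊕ ↥Uᶜ × Fin k) ≤ Nat.card α * k :=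
    calc Nat.card (↥U ⊕ ↥Uᶜ × Fin k) = Nat.card U + Nat.card ↥Uᶜ * k := by
          simp [Nat.card_sum, Nat.card_prod]
      _ ≤ Nat.card U * k + Nat.card ↥Uᶜ * k := by gcongr; exact Nat.le_mul_of_pos_right _ hk
      _ = Nat.card α * k := by
          rw [← add_mul, ← Nat.card_sum, Nat.card_congr (Equiv.Set.sumCompl U)]
  have := Fintype.ofFinite (↥U ⊕ ↥Uᶜ × Fin k)
  exact Function.Embedding.nonempty_of_card_le
    (by rwa [← Nat.card_eq_fintype_card, Fintype.card_fin])

end Blowup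

/-- If `H \ U` has `r` components and the `(U,|T|)`-blow-up of `H` is `T`-free, then for every
positive `n` divisible by `|H|` there is a `T`-free graph on `n` vertices with at least
`(n/|H|)^r` copies of `H`; consequently `ex(n,H,T) ≥ (n/|H|)^r`. -/
theorem stmt_2 {α γ : Type*} [Fintype α] [Fintype γ] (H : SimpleGraph α) (T : SimpleGraph γ)
    (hTree : T.IsTree) (U : Set α) (r : ℕ)
    (hr : Nat.card ((H.induce Uᶜ).ConnectedComponent) = r)
    (hfree : TFree (blowup H U (Fintype.card γ)) T) :
    ∀ n : ℕ, 0 < n → Fintype.card α ∣ n →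
      (∃ G : SimpleGraph (Fin n), TFree G T ∧ (n / Fintype.card α) ^ r ≤ copyCount H G) ∧
      (n / Fintype.card α) ^ r ≤ exNum n H T := by
  rintro n hn ⟨k, rfl⟩
  have hα : 0 < Fintype.card α := Nat.pos_of_mul_pos_right hn
  have hk : 0 < k := Nat.pos_of_mul_pos_left hn
  have : Nonempty γ := hTree.connected.nonempty
  have : NeZero (Fintype.card γ) := ⟨Fintype.card_ne_zero⟩
  -- A one-vertex `T` would embed in the nonempty blow-up.
  have : Nontrivial γ := by
    by_contra hγ
    have : Subsingleton γ := not_nontrivial_iff_subsingleton.1 hγ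
    have : Nonempty α := Fintype.card_pos_iff.1 hα
    have : Nonempty (↥U ⊕ ↥Uᶜ × Fin (Fintype.card γ)) :=
      ⟨blowupCopy H U _ (fun _ => 0) (Classical.arbitrary α)⟩
    exact hfree (hasCopy_of_subsingleton T _)
  have hT : ∀ v, ∃ w, T.Adj v w := hTree.connected.preconnected.exists_adj_of_nontrivial
  have hblowup : TFree (blowup H U k) T := fun h =>
    hfree (h.blowup_of_card_le (Nat.card_eq_fintype_card).le)
  rw [Nat.mul_div_cancel_left k hα, ← hr, ← Nat.card_eq_fintype_card]
  obtain ⟨e⟩ := nonempty_embedding_fin_mul (k := k) U hk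
  have hcount := pow_card_connectedComponent_le_copyCount.trans
    (copyCount_le_of_embedding (SimpleGraph.Embedding.map e (blowup H U k)))
  have hG := hblowup.map hT e
  exact ⟨⟨_, hG, hcount⟩, hcount.trans (copyCount_le_exNum hG)⟩
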